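/- Let X be a path-connected topological space, A ⊆ X a path-connected subspace, and f : X̃ → X a path-connected covering map such that Ã = f⁻¹(A) is path-connected and the inclusion-induced map π₁(Ã) → π₁(X̃) is an isomorphism. Then the inclusion-induced map π₁(A) → π₁(X) is injective. -/

import Mathlib

/-! A loop `γ` in `A` that dies in `X` lifts, through the restricted covering `f⁻¹(A) → A`, to a
path `Γ` in `Ã`. Seen in `X̃`, `Γ` lifts the null-homotopic loop `γ` along `f`, so by homotopy
lifting it is closed and null-homotopic in `X̃`. Injectivity of `π₁(Ã) → π₁(X̃)` makes `Γ`
null-homotopic in `Ã`, and projecting to `A` shows that `γ` is null-homotopic there. -/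

open CategoryTheory

/-- The homomorphism on fundamental groups induced by a continuous map. -/
noncomputable def π₁ind {X Y : Type} [TopologicalSpace X] [TopologicalSpace Y]
    (f : C(X, Y)) (x : X) : FundamentalGroup X x →* FundamentalGroup Y (f x) :=
  Functor.mapEnd (FundamentalGroupoid.mk x)
    (FundamentalGroupoid.map f)

open Function unitInterval

section

variable {E X : Type*} [TopologicalSpace E] [TopologicalSpace X] {p : E → X}
  (cov : IsCoveringMap p)
include cov

theorem IsCoveringMap.apply_one_eq_apply_zero_of_homotopic_refl {x : X} {γ : Path x x}
    (hγ : γ.Homotopic (Path.refl x)) {Γ : C(I, E)} (hΓ : p ∘ Γ = γ) : Γ 1 = Γ 0 := by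
  have hx : x = p (Γ 0) := by simpa using (congrFun hΓ 0).symm
  have hγ0 : (γ : C(I, X)) 0 = p (Γ 0) := γ.source.trans hx
  calc Γ 1 = cov.liftPath γ (Γ 0) hγ0 1 := by rw [← (cov.eq_liftPath_iff' hγ0).2 ⟨hΓ, rfl⟩]
    _ = cov.liftPath (.const I x) (Γ 0) hx 1 :=
      cov.liftPath_apply_one_eq_of_homotopicRel hγ (Γ 0) hγ0 hx
    _ = Γ 0 := by rw [cov.liftPath_const hx]; rfl

theorem IsCoveringMap.injective_fundamentalGroupMap_val_of_preimage (A : Set X) (e : p ⁻¹' A)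
    (h : Injective (FundamentalGroup.map ⟨Subtype.val, continuous_subtype_val⟩ e :
      FundamentalGroup (p ⁻¹' A) e →* FundamentalGroup E e)) :
    Injective (FundamentalGroup.map ⟨Subtype.val, continuous_subtype_val⟩
      (A.restrictPreimage p e) : FundamentalGroup A _ →* FundamentalGroup X (p e)) := by
  rw [injective_iff_map_eq_one]
  intro γ hγ
  induction γ using Path.Homotopic.Quotient.ind with | mk γ => ?_
  have hγX : (γ.map continuous_subtype_val).Homotopic (Path.refl (p e)) :=
    Path.Homotopic.Quotient.exact hγ
  let q : C(p ⁻¹' A, A) := ⟨A.restrictPreimage p, (cov.restrictPreimage A).continuous⟩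
  obtain ⟨Γ, hΓq, hΓ0⟩ := (cov.restrictPreimage A).exists_path_lifts γ e γ.source
  have hΓp : p ∘ ((⟨Subtype.val, continuous_subtype_val⟩ : C(p ⁻¹' A, E)).comp Γ) =
      γ.map continuous_subtype_val := by
    ext t
    exact congrArg Subtype.val (congrFun hΓq t)
  have hΓ1 : Γ 1 = e := Subtype.ext <| by
    simpa [hΓ0] using cov.apply_one_eq_apply_zero_of_homotopic_refl hγX hΓp
  let Γ' : Path e e := ⟨Γ, hΓ0, hΓ1⟩
  have hΓ'_eq_one : (FundamentalGroup.fromPath (.mk Γ') : FundamentalGroup (p ⁻¹' A) e) = 1 := by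
    apply h
    rw [map_one]
    apply cov.injective_path_homotopic_map e e
    exact (congrArg Path.Homotopic.Quotient.mk (Path.ext hΓp)).trans
      (Path.Homotopic.Quotient.eq.2 hγX)
  have hΓ'q : Γ'.map q.continuous = γ := Path.ext hΓq
  rw [← hΓ'q, Path.Homotopic.Quotient.mk_map]
  exact (congrArg (FundamentalGroup.map q e) hΓ'_eq_one).trans (map_one _)

end

theorem stmt_0_general {X Xt : Type} [TopologicalSpace X] [TopologicalSpace Xt]
    (f : Xt → X) (hf : IsCoveringMap f)
    (A : Set X)
    (a₀ : A) (b₀ : (f ⁻¹' A : Set Xt)) (hbase : f ↑b₀ = ↑a₀)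
    (hiso : Function.Bijective
      (π₁ind (⟨Subtype.val, continuous_subtype_val⟩ : C((f ⁻¹' A : Set Xt), Xt)) b₀)) :
    Function.Injective (π₁ind (⟨Subtype.val, continuous_subtype_val⟩ : C(A, X)) a₀) := by
  obtain rfl : A.restrictPreimage f b₀ = a₀ := Subtype.ext hbase
  exact hf.injective_fundamentalGroupMap_val_of_preimage A b₀ hiso.injective

/-- Statement: X path-connected, A ⊆ X path-connected, f : X̃ → X a covering with X̃
path-connected, Ã = f⁻¹(A) path-connected, basepoints chosen compatibly, and the
inclusion Ã ↪ X̃ inducing an isomorphism on fundamental groups.  Then the inclusion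
A ↪ X induces the stated property on fundamental groups. -/
theorem stmt_0 {X Xt : Type} [TopologicalSpace X] [TopologicalSpace Xt]
    [PathConnectedSpace X] [PathConnectedSpace Xt]
    (f : Xt → X) (hf : IsCoveringMap f)
    (A : Set X) (hA : IsPathConnected A) (hAt : IsPathConnected (f ⁻¹' A))
    (a₀ : A) (b₀ : (f ⁻¹' A : Set Xt)) (hbase : f ↑b₀ = ↑a₀)
    (hiso : Function.Bijective
      (π₁ind (⟨Subtype.val, continuous_subtype_val⟩ : C((f ⁻¹' A : Set Xt), Xt)) b₀)) :
    Function.Injective (π₁ind (⟨Subtype.val, continuous_subtype_val⟩ : C(A, X)) a₀) :=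
  stmt_0_general f hf A a₀ b₀ hbase hiso
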